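/- Let I_L ⊆ W(E) be the left ideal generated by μ_W(L). Then I_L equals the A-span of {μ_W(e_I) : I ∈ Υ_1}; equivalently, I_L = μ_W(S̃_1(E)), where S̃_1(E) ⊆ S̃(E) is the A-span of {e_I : I ∈ Υ_1}. -/

import Mathlib

/-!
Context: `A` a commutative ring, `lam ∈ A`, `E` a finite free `A`-module with basis
`e : Fin (ν+ν') → E` (the first `ν` vectors spanning `L`, the last `ν'` spanning `L'`,
both isotropic for the alternating form `ω`).  `W(E)` is the `RingQuot` Weyl algebra
with projection `μ_W`, `e_I` the tensor monomials, and `Υ₁` the set of nonincreasing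
sequences containing at least one index `< ν` (α-length ≥ 1).
-/

/-- The defining relation of the Weyl algebra `W(E)`. -/
def weylRel (A : Type*) [CommRing A] {E : Type*} [AddCommGroup E] [Module A E]
    (lam : A) (ω : E →ₗ[A] E →ₗ[A] A) :
    TensorAlgebra A E → TensorAlgebra A E → Prop := fun a b =>
  ∃ x y : E, a = TensorAlgebra.ι A x * TensorAlgebra.ι A y ∧
    b = TensorAlgebra.ι A y * TensorAlgebra.ι A x +
      algebraMap A (TensorAlgebra A E) (lam * ω x y)

/-- `e_I = e_{i₁} ⊗ ⋯ ⊗ e_{i_p} ∈ T(E)` for a list of indices `I` (with `e_∅ = 1`). -/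
noncomputable def eTensor {A : Type*} [CommRing A] {E : Type*} [AddCommGroup E]
    [Module A E] {n : ℕ} (e : Module.Basis (Fin n) A E) (I : List (Fin n)) : TensorAlgebra A E :=
  (I.map fun i => TensorAlgebra.ι A (e i)).prod

/-!
Let `S₁` be the `A`-span of the ordered monomials `μ_W(e_I)` having an index in `L`. An ordered
monomial with an index in `L` ends with one, so it lies in the left ideal `I_L`. Conversely,
`S₁` contains `μ_W(L)` and is a left ideal, because `W(E)` is generated by the `e_j` and
left multiplication by `e_j` preserves `S₁`: for an ordered monomial `e_k e_I` with `j < k`,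
`e_j e_k e_I = e_k (e_j e_I) + λ ω(e_j, e_k) e_I`, the first term is handled recursively, and by
isotropy the second vanishes unless `e_j ∈ L`, `e_k ∈ L'`, in which case the index in `L`
lies in `I`.
-/

section eTensor

variable {A : Type*} [CommRing A] {E : Type*} [AddCommGroup E] [Module A E] {n : ℕ}
  (e : Module.Basis (Fin n) A E)

theorem eTensor_nil : eTensor e [] = 1 :=
  rfl

theorem eTensor_cons (j : Fin n) (I : List (Fin n)) :
    eTensor e (j :: I) = TensorAlgebra.ι A (e j) * eTensor e I :=
  List.prod_cons

theorem eTensor_singleton (j : Fin n) : eTensor e [j] = TensorAlgebra.ι A (e j) := by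
  simp [eTensor]

theorem eTensor_append (I J : List (Fin n)) : eTensor e (I ++ J) = eTensor e I * eTensor e J := by
  simp [eTensor]

end eTensor

theorem Submodule.mul_mem_of_adjoin_eq_top {R B : Type*} [CommSemiring R] [Semiring B]
    [Algebra R B] {s : Set B} (hs : Algebra.adjoin R s = ⊤) {S : Submodule R B}
    (hS : ∀ x ∈ s, ∀ w ∈ S, x * w ∈ S) (b : B) {w : B} (hw : w ∈ S) : b * w ∈ S := by
  have hb : b ∈ Algebra.adjoin R s := hs ▸ Algebra.mem_top
  induction hb using Algebra.adjoin_induction generalizing w with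
  | mem x hx => exact hS x hx w hw
  | algebraMap r => rw [← Algebra.smul_def]; exact S.smul_mem r hw
  | add x y _ _ hx hy => rw [add_mul]; exact S.add_mem (hx hw) (hy hw)
  | mul x y _ _ hx hy => rw [mul_assoc]; exact hx (hy hw)

theorem TensorAlgebra.adjoin_range_ι_comp_eq_top {R M ι : Type*} [CommSemiring R]
    [AddCommMonoid M] [Module R M] {v : ι → M} (hv : Submodule.span R (Set.range v) = ⊤) :
    Algebra.adjoin R (Set.range fun i => TensorAlgebra.ι R (v i)) = ⊤ := by
  rw [eq_top_iff, ← TensorAlgebra.adjoin_range_ι, Algebra.adjoin_le_iff]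
  rintro _ ⟨x, rfl⟩
  have hx : TensorAlgebra.ι R x ∈
      Submodule.span R (Set.range fun i => TensorAlgebra.ι R (v i)) := by
    rw [← Function.comp_def, Set.range_comp, Submodule.span_image, hv]
    exact Submodule.mem_map_of_mem Submodule.mem_top
  exact Algebra.span_le_adjoin R _ hx

section Weyl

variable {A : Type*} [CommRing A] {E : Type*} [AddCommGroup E] [Module A E]
  (lam : A) (ω : E →ₗ[A] E →ₗ[A] A)

local notation "μ" => RingQuot.mkAlgHom A (weylRel A lam ω)

theorem mkAlgHom_weylRel_ι_mul_ι (x y : E) :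
    μ (TensorAlgebra.ι A x) * μ (TensorAlgebra.ι A y) =
      μ (TensorAlgebra.ι A y) * μ (TensorAlgebra.ι A x) + algebraMap A _ (lam * ω x y) := by
  simpa only [map_mul, map_add, AlgHom.commutes] using
    RingQuot.mkAlgHom_rel A (s := weylRel A lam ω) ⟨x, y, rfl, rfl⟩

variable {n : ℕ} (e : Module.Basis (Fin n) A E) (ν : ℕ)

theorem adjoin_range_mkAlgHom_weylRel_ι_basis :
    Algebra.adjoin A (Set.range fun i => μ (TensorAlgebra.ι A (e i))) = ⊤ := by
  rw [← Function.comp_def (f := μ), Set.range_comp, Algebra.adjoin_image,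
    TensorAlgebra.adjoin_range_ι_comp_eq_top e.span_eq, Algebra.map_top,
    AlgHom.range_eq_top]
  exact RingQuot.mkAlgHom_surjective A _

theorem mkAlgHom_ι_mul_eTensor_mem_span
    (hiso : ∀ i j : Fin n, ((i : ℕ) < ν ↔ (j : ℕ) < ν) → ω (e i) (e j) = 0) (j : Fin n)
    {I : List (Fin n)} (hI : I.Pairwise (· ≥ ·)) {b : Fin n} (hjb : j ≤ b) (hIb : ∀ i ∈ I, i ≤ b) :
    μ (TensorAlgebra.ι A (e j)) * μ (eTensor e I) ∈ Submodule.span A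
      {w | ∃ K : List (Fin n), K.Pairwise (· ≥ ·) ∧ (∀ m ∈ K, m ≤ b) ∧
        ((∃ i ∈ I, (i : ℕ) < ν) → ∃ i ∈ K, (i : ℕ) < ν) ∧ w = μ (eTensor e K)} := by
  induction I generalizing b with
  | nil => exact Submodule.subset_span ⟨[j], by simp, by simpa, by simp,
    by rw [eTensor_singleton, eTensor_nil, map_one, mul_one]⟩
  | cons k I ih =>
    obtain ⟨hkI, hIsorted⟩ := List.pairwise_cons.1 hI
    rcases le_or_gt k j with hkj | hjk
    · refine Submodule.subset_span ⟨j :: k :: I, hI.cons ?_, List.forall_mem_cons.2 ⟨hjb, hIb⟩,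
        ?_, by simp only [eTensor_cons, map_mul]⟩
      · exact List.forall_mem_cons.2 ⟨hkj, fun m hm => (hkI m hm).trans hkj⟩
      · exact fun ⟨i, hi, hiν⟩ => ⟨i, List.mem_cons_of_mem _ hi, hiν⟩
    rw [eTensor_cons, map_mul, ← mul_assoc, mkAlgHom_weylRel_ι_mul_ι, add_mul, mul_assoc,
      ← Algebra.smul_def]
    refine Submodule.add_mem _ ?_ ?_
    · -- the recursive call is made with bound `k`, so `k` can be prepended to its monomials
      refine (Submodule.span_le (p := (Submodule.span A _).comap
        (LinearMap.mulLeft A (μ (TensorAlgebra.ι A (e k)))))).2 ?_ (ih hIsorted hjk.le hkI)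
      rintro _ ⟨K, hK, hKk, hKwit, rfl⟩
      have hkb := hIb k List.mem_cons_self
      refine Submodule.subset_span ⟨k :: K, hK.cons hKk,
        List.forall_mem_cons.2 ⟨hkb, fun m hm => (hKk m hm).trans hkb⟩, ?_,
        by simp only [eTensor_cons, map_mul]; rfl⟩
      · rintro ⟨i, hi, hiν⟩
        rcases List.mem_cons.1 hi with rfl | hi
        · exact ⟨i, List.mem_cons_self, hiν⟩
        · obtain ⟨i', hi', hi'ν⟩ := hKwit ⟨i, hi, hiν⟩
          exact ⟨i', List.mem_cons_of_mem _ hi', hi'ν⟩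
    · by_cases hω : ω (e j) (e k) = 0
      · simp [hω]
      have hk : ¬ (k : ℕ) < ν := fun hk =>
        hω (hiso j k ⟨fun _ => hk, fun _ => (Fin.lt_def.1 hjk).trans hk⟩)
      refine Submodule.smul_mem _ _ (Submodule.subset_span ⟨I, hIsorted,
        fun m hm => hIb m (List.mem_cons_of_mem _ hm), ?_, rfl⟩)
      rintro ⟨i, hi, hiν⟩
      rcases List.mem_cons.1 hi with rfl | hi
      · exact absurd hiν hk
      · exact ⟨i, hi, hiν⟩

theorem mul_mem_span_sorted_eTensor
    (hiso : ∀ i j : Fin n, ((i : ℕ) < ν ↔ (j : ℕ) < ν) → ω (e i) (e j) = 0)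
    (a : RingQuot (weylRel A lam ω)) {w : RingQuot (weylRel A lam ω)}
    (hw : w ∈ Submodule.span A {w | ∃ I : List (Fin n), I.Pairwise (· ≥ ·) ∧
      (∃ i ∈ I, (i : ℕ) < ν) ∧ w = μ (eTensor e I)}) :
    a * w ∈ Submodule.span A {w | ∃ I : List (Fin n), I.Pairwise (· ≥ ·) ∧
      (∃ i ∈ I, (i : ℕ) < ν) ∧ w = μ (eTensor e I)} := by
  refine Submodule.mul_mem_of_adjoin_eq_top (adjoin_range_mkAlgHom_weylRel_ι_basis lam ω e) ?_ a hw
  rintro _ ⟨j, rfl⟩ w hw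
  refine (Submodule.span_le (p := (Submodule.span A _).comap (LinearMap.mulLeft A _))).2 ?_ hw
  rintro _ ⟨I, hI, hIwit, rfl⟩
  have hlast : ∀ i : Fin n, i ≤ ⟨n - 1, by omega⟩ := fun i => Fin.le_def.2 (by simp; omega)
  refine Submodule.span_mono ?_
    (mkAlgHom_ι_mul_eTensor_mem_span lam ω e ν hiso j hI (hlast j) fun i _ => hlast i)
  rintro _ ⟨K, hK, -, hKwit, rfl⟩
  exact ⟨K, hK, hKwit hIwit, rfl⟩

theorem mkAlgHom_eTensor_mem_of_sorted {J : Ideal (RingQuot (weylRel A lam ω))}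
    (hJ : ∀ i : Fin n, (i : ℕ) < ν → μ (TensorAlgebra.ι A (e i)) ∈ J)
    {I : List (Fin n)} (hI : I.Pairwise (· ≥ ·)) (hwit : ∃ i ∈ I, (i : ℕ) < ν) :
    μ (eTensor e I) ∈ J := by
  obtain ⟨i, hi, hiν⟩ := hwit
  rw [← List.dropLast_append_getLast (List.ne_nil_of_mem hi), eTensor_append, eTensor_singleton,
    map_mul]
  exact J.mul_mem_left _ (hJ _ ((Fin.le_def.1 (hI.rel_getLast hi)).trans_lt hiν))

theorem span_mkAlgHom_ι_eq_span_sorted_eTensor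
    (hiso : ∀ i j : Fin n, ((i : ℕ) < ν ↔ (j : ℕ) < ν) → ω (e i) (e j) = 0) :
    (Ideal.span (μ '' (TensorAlgebra.ι A ''
      (Submodule.span A (e '' {i | (i : ℕ) < ν}) : Set E)))).restrictScalars A =
      Submodule.span A {w | ∃ I : List (Fin n), I.Pairwise (· ≥ ·) ∧
        (∃ i ∈ I, (i : ℕ) < ν) ∧ w = μ (eTensor e I)} := by
  refine le_antisymm (fun z hz => ?_) (Submodule.span_le.2 ?_)
  · rw [Submodule.restrictScalars_mem] at hz
    induction hz using Submodule.span_induction with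
    | mem w hw =>
      obtain ⟨_, ⟨x, hx, rfl⟩, rfl⟩ := hw
      refine (Submodule.span_le (p := (Submodule.span A _).comap
        ((μ).toLinearMap ∘ₗ TensorAlgebra.ι A))).2 ?_ hx
      rintro _ ⟨i, hi, rfl⟩
      exact Submodule.subset_span ⟨[i], List.pairwise_singleton _ _,
        ⟨i, List.mem_singleton_self _, hi⟩, by rw [eTensor_singleton]; rfl⟩
    | zero => exact Submodule.zero_mem _
    | add x y _ _ hx hy => exact Submodule.add_mem _ hx hy
    | smul a x _ hx => exact mul_mem_span_sorted_eTensor lam ω e ν hiso a hx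
  · rintro _ ⟨I, hI, hwit, rfl⟩
    exact mkAlgHom_eTensor_mem_of_sorted lam ω e ν
      (fun i hi => Ideal.subset_span (Set.mem_image_of_mem μ (Set.mem_image_of_mem _
        (Submodule.subset_span (Set.mem_image_of_mem e hi))))) hI hwit

end Weyl

theorem omega_basis_eq_zero_of_lt_iff_lt {A : Type*} [CommRing A] {E : Type*} [AddCommGroup E]
    [Module A E] {ω : E →ₗ[A] E →ₗ[A] A} {ν ν' : ℕ} {e : Module.Basis (Fin (ν + ν')) A E}
    (hLiso : ∀ x ∈ Submodule.span A (Set.range fun i : Fin ν => e (Fin.castAdd ν' i)),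
      ∀ y ∈ Submodule.span A (Set.range fun i : Fin ν => e (Fin.castAdd ν' i)), ω x y = 0)
    (hL'iso : ∀ x ∈ Submodule.span A (Set.range fun i : Fin ν' => e (Fin.natAdd ν i)),
      ∀ y ∈ Submodule.span A (Set.range fun i : Fin ν' => e (Fin.natAdd ν i)), ω x y = 0)
    (i j : Fin (ν + ν')) (hij : (i : ℕ) < ν ↔ (j : ℕ) < ν) : ω (e i) (e j) = 0 := by
  have mem_L : ∀ k : Fin (ν + ν'), (k : ℕ) < ν →
      e k ∈ Submodule.span A (Set.range fun i : Fin ν => e (Fin.castAdd ν' i)) :=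
    fun k hk => Submodule.subset_span ⟨⟨k, hk⟩, rfl⟩
  have mem_L' : ∀ k : Fin (ν + ν'), ¬ (k : ℕ) < ν →
      e k ∈ Submodule.span A (Set.range fun i : Fin ν' => e (Fin.natAdd ν i)) :=
    fun k hk => Submodule.subset_span
      ⟨⟨k - ν, by omega⟩, congrArg e (Fin.ext (by simp only [Fin.val_natAdd]; omega))⟩
  by_cases hi : (i : ℕ) < ν
  · exact hLiso _ (mem_L i hi) _ (mem_L j (hij.1 hi))
  · exact hL'iso _ (mem_L' i hi) _ (mem_L' j (hij.not.1 hi))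

theorem stmt5_general (A : Type*) [CommRing A] (E : Type*) [AddCommGroup E] [Module A E]
    (lam : A) (ω : E →ₗ[A] E →ₗ[A] A)
    (ν ν' : ℕ) (e : Module.Basis (Fin (ν + ν')) A E)
    (hLiso : ∀ x ∈ Submodule.span A (Set.range fun i : Fin ν => e (Fin.castAdd ν' i)),
      ∀ y ∈ Submodule.span A (Set.range fun i : Fin ν => e (Fin.castAdd ν' i)),
        ω x y = 0)
    (hL'iso : ∀ x ∈ Submodule.span A (Set.range fun i : Fin ν' => e (Fin.natAdd ν i)),
      ∀ y ∈ Submodule.span A (Set.range fun i : Fin ν' => e (Fin.natAdd ν i)),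
        ω x y = 0) :
    (Ideal.span
        (⇑(RingQuot.mkAlgHom A (weylRel A lam ω)) ''
          (⇑(TensorAlgebra.ι A) ''
            (Submodule.span A (Set.range fun i : Fin ν => e (Fin.castAdd ν' i)) :
              Set E)))).restrictScalars A =
      Submodule.span A
        {w | ∃ I : List (Fin (ν + ν')), List.Pairwise (· ≥ ·) I ∧
          (∃ i ∈ I, (i : ℕ) < ν) ∧
          w = RingQuot.mkAlgHom A (weylRel A lam ω) (eTensor e I)} ∧
    (Ideal.span
        (⇑(RingQuot.mkAlgHom A (weylRel A lam ω)) ''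
          (⇑(TensorAlgebra.ι A) ''
            (Submodule.span A (Set.range fun i : Fin ν => e (Fin.castAdd ν' i)) :
              Set E)))).restrictScalars A =
      Submodule.map (RingQuot.mkAlgHom A (weylRel A lam ω)).toLinearMap
        (Submodule.span A
          {t | ∃ I : List (Fin (ν + ν')), List.Pairwise (· ≥ ·) I ∧
            (∃ i ∈ I, (i : ℕ) < ν) ∧ t = eTensor e I}) := by
  have hL : (Set.range fun i : Fin ν => e (Fin.castAdd ν' i)) = e '' {i | (i : ℕ) < ν} := by
    ext x
    constructor
    · rintro ⟨i, rfl⟩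
      exact ⟨_, i.isLt, rfl⟩
    · rintro ⟨i, hi, rfl⟩
      exact ⟨⟨i, hi⟩, rfl⟩
  have hIL := span_mkAlgHom_ι_eq_span_sorted_eTensor lam ω e ν
    (omega_basis_eq_zero_of_lt_iff_lt hLiso hL'iso)
  rw [hL]
  refine ⟨hIL, hIL.trans ?_⟩
  rw [Submodule.map_span]
  refine congrArg (Submodule.span A) (Set.ext fun w => ?_)
  constructor
  · rintro ⟨I, hI, hwit, rfl⟩
    exact ⟨_, ⟨I, hI, hwit, rfl⟩, rfl⟩
  · rintro ⟨_, ⟨I, hI, hwit, rfl⟩, rfl⟩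
    exact ⟨I, hI, hwit, rfl⟩

/-- The left ideal `I_L ⊆ W(E)` generated by `μ_W(L)` equals the
`A`-span of `{μ_W(e_I) : I ∈ Υ₁}`, i.e. `I_L = μ_W(S̃₁(E))` where `S̃₁(E)` is the
`A`-span of the `e_I` with `I` nonincreasing of α-length at least 1. -/
theorem stmt5 (A : Type*) [CommRing A] (E : Type*) [AddCommGroup E] [Module A E]
    (lam : A) (ω : E →ₗ[A] E →ₗ[A] A) (halt : ∀ x : E, ω x x = 0)
    (ν ν' : ℕ) (e : Module.Basis (Fin (ν + ν')) A E)
    (hLiso : ∀ x ∈ Submodule.span A (Set.range fun i : Fin ν => e (Fin.castAdd ν' i)),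
      ∀ y ∈ Submodule.span A (Set.range fun i : Fin ν => e (Fin.castAdd ν' i)),
        ω x y = 0)
    (hL'iso : ∀ x ∈ Submodule.span A (Set.range fun i : Fin ν' => e (Fin.natAdd ν i)),
      ∀ y ∈ Submodule.span A (Set.range fun i : Fin ν' => e (Fin.natAdd ν i)),
        ω x y = 0) :
    (Ideal.span
        (⇑(RingQuot.mkAlgHom A (weylRel A lam ω)) ''
          (⇑(TensorAlgebra.ι A) ''
            (Submodule.span A (Set.range fun i : Fin ν => e (Fin.castAdd ν' i)) :
              Set E)))).restrictScalars A =
      Submodule.span A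
        {w | ∃ I : List (Fin (ν + ν')), List.Pairwise (· ≥ ·) I ∧
          (∃ i ∈ I, (i : ℕ) < ν) ∧
          w = RingQuot.mkAlgHom A (weylRel A lam ω) (eTensor e I)} ∧
    (Ideal.span
        (⇑(RingQuot.mkAlgHom A (weylRel A lam ω)) ''
          (⇑(TensorAlgebra.ι A) ''
            (Submodule.span A (Set.range fun i : Fin ν => e (Fin.castAdd ν' i)) :
              Set E)))).restrictScalars A =
      Submodule.map (RingQuot.mkAlgHom A (weylRel A lam ω)).toLinearMap
        (Submodule.span A
          {t | ∃ I : List (Fin (ν + ν')), List.Pairwise (· ≥ ·) I ∧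
            (∃ i ∈ I, (i : ℕ) < ν) ∧ t = eTensor e I}) :=
  stmt5_general A E lam ω ν ν' e hLiso hL'iso
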